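/- Let d denote the tridiagonal discriminant of a list of integers (determinant of the matrix with the list on the diagonal, −1 on the sub- and super-diagonal; d([]) = 1). Then for every finite list T with all entries ≥ 2, there exists a finite list S with all entries ≥ 2 such that d(T ++ [1] ++ S) = 0, where ++ denotes concatenation. -/

import Mathlib

/-- The tridiagonal matrix with diagonal entries given by the list `T`
and entries `-1` on the sub- and super-diagonal. -/
def tridiagMatrix (T : List ℤ) : Matrix (Fin T.length) (Fin T.length) ℤ :=
  Matrix.of fun i j =>
    if i = j then T.get i
    else if (i : ℕ) + 1 = (j : ℕ) ∨ (j : ℕ) + 1 = (i : ℕ) then -1 else 0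

/-- The discriminant of a chain `T`: the determinant of the associated tridiagonal
matrix (so the discriminant of the empty list is `1`). -/
def chainDisc (T : List ℤ) : ℤ := (tridiagMatrix T).det

/-!
Write `d` for `chainDisc` and `A'` for `A` without its last entry. Expanding the determinant along
the first row gives `d (a :: b :: L) = a * d (b :: L) - d L`, and from it the gluing formula
`d (A ++ B) = d A * d B - d A' * d B.tail`. Hence, with `n = d T`, `m = d T'`, `p = d S` and
`q = d S.tail`, the discriminant of `T ++ [1] ++ S` is `n * (p - q) - m * p`. For entries `≥ 2`
one has `0 < m < n` with `m`, `n` coprime, so it suffices to find `S` with `(p, q) = (n, n - m)`.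
Every coprime pair `0 < q < p` arises in this way: take `S` to be the Hirzebruch–Jung continued
fraction of `p / q`, whose first entry is `⌈p / q⌉`.
-/

section
variable (a : ℤ) (L : List ℤ)

lemma tridiagMatrix_cons_zero_zero : tridiagMatrix (a :: L) 0 0 = a := by
  simp [tridiagMatrix]

lemma tridiagMatrix_cons_succ_succ (i j : Fin L.length) :
    tridiagMatrix (a :: L) i.succ j.succ = tridiagMatrix L i j := by
  simp [tridiagMatrix, Fin.ext_iff]

lemma tridiagMatrix_cons_zero_succ (j : Fin L.length) :
    tridiagMatrix (a :: L) 0 j.succ = if (j : ℕ) = 0 then -1 else 0 := by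
  simp [tridiagMatrix, Fin.ext_iff]

lemma tridiagMatrix_cons_succ_zero (i : Fin L.length) :
    tridiagMatrix (a :: L) i.succ 0 = if (i : ℕ) = 0 then -1 else 0 := by
  simp [tridiagMatrix, Fin.ext_iff]

end

lemma Matrix.det_of_row_zero_col_zero_vanish_from_two {R : Type*} [CommRing R] {n : ℕ}
    (M : Matrix (Fin (n + 2)) (Fin (n + 2)) R)
    (hrow : ∀ j : Fin n, M 0 j.succ.succ = 0) (hcol : ∀ i : Fin n, M i.succ.succ 0 = 0) :
    M.det = M 0 0 * (M.submatrix Fin.succ Fin.succ).det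
      - M 0 1 * M 1 0 * (M.submatrix (Fin.succ ∘ Fin.succ) (Fin.succ ∘ Fin.succ)).det := by
  have hminor : (M.submatrix Fin.succ (Fin.succAbove 1)).det =
      M 1 0 * (M.submatrix (Fin.succ ∘ Fin.succ) (Fin.succ ∘ Fin.succ)).det := by
    rw [Matrix.det_succ_column_zero, Fin.sum_univ_succ]
    have hsucc : ∀ j : Fin n, (1 : Fin (n + 2)).succAbove j.succ = j.succ.succ := fun j => by
      rw [← Fin.succ_zero_eq_one, Fin.succ_succAbove_succ, Fin.succAbove_zero]
    simp [hcol, hsucc, Fin.succAbove_zero, Function.comp_def]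
  rw [Matrix.det_succ_row_zero, Fin.sum_univ_succ, Fin.sum_univ_succ]
  simp [hrow, hminor]
  ring

lemma chainDisc_cons_cons (a b : ℤ) (L : List ℤ) :
    chainDisc (a :: b :: L) = a * chainDisc (b :: L) - chainDisc L := by
  -- `(a :: b :: L).length` is `L.length + 2` only up to unfolding, so we fix the index type.
  let M : Matrix (Fin (L.length + 2)) (Fin (L.length + 2)) ℤ := tridiagMatrix (a :: b :: L)
  have h := M.det_of_row_zero_col_zero_vanish_from_two
    (fun j => tridiagMatrix_cons_zero_succ a (b :: L) j.succ)
    (fun i => tridiagMatrix_cons_succ_zero a (b :: L) i.succ)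
  have hsub : M.submatrix Fin.succ Fin.succ = tridiagMatrix (b :: L) := by
    ext i j; exact tridiagMatrix_cons_succ_succ a (b :: L) i j
  have hsub₂ : M.submatrix (Fin.succ ∘ Fin.succ) (Fin.succ ∘ Fin.succ) = tridiagMatrix L := by
    ext i j
    simp only [Matrix.submatrix_apply, Function.comp_apply, M, tridiagMatrix_cons_succ_succ]
  have h01 : M 0 1 = -1 := tridiagMatrix_cons_zero_succ a (b :: L) 0
  have h10 : M 1 0 = -1 := tridiagMatrix_cons_succ_zero a (b :: L) 0
  have h00 : M 0 0 = a := tridiagMatrix_cons_zero_zero a (b :: L)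
  rw [hsub, hsub₂, h00, h01, h10] at h
  simpa [chainDisc] using h

@[simp] lemma chainDisc_nil : chainDisc [] = 1 := Matrix.det_fin_zero

@[simp] lemma chainDisc_singleton (a : ℤ) : chainDisc [a] = a := by
  simp [chainDisc, tridiagMatrix]

lemma chainDisc_cons {L : List ℤ} (a : ℤ) (hL : L ≠ []) :
    chainDisc (a :: L) = a * chainDisc L - chainDisc L.tail := by
  obtain ⟨b, L, rfl⟩ := List.exists_cons_of_ne_nil hL
  exact chainDisc_cons_cons a b L

lemma chainDisc_append :
    ∀ {A B : List ℤ}, A ≠ [] → B ≠ [] →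
      chainDisc (A ++ B) = chainDisc A * chainDisc B - chainDisc A.dropLast * chainDisc B.tail
  | [a], _, _, hB => by simp [chainDisc_cons a hB]
  | [a, b], B, _, hB => by
    simp [chainDisc_cons_cons, chainDisc_cons b hB]
    ring
  | a :: b :: c :: A, B, _, hB => by
    have ih₁ := chainDisc_append (A := b :: c :: A) (List.cons_ne_nil _ _) hB
    have ih₂ := chainDisc_append (A := c :: A) (List.cons_ne_nil _ _) hB
    simp only [List.cons_append, List.dropLast_cons_cons, chainDisc_cons_cons] at ih₁ ih₂ ⊢
    rw [ih₁, ih₂]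
    ring

lemma chainDisc_concat {L : List ℤ} (hL : L ≠ []) (a : ℤ) :
    chainDisc (L ++ [a]) = a * chainDisc L - chainDisc L.dropLast := by
  rw [chainDisc_append hL (List.cons_ne_nil a []), chainDisc_singleton, List.tail_cons,
    chainDisc_nil]
  ring

lemma isCoprime_chainDisc_dropLast {T : List ℤ} (hT : T ≠ []) :
    IsCoprime (chainDisc T) (chainDisc T.dropLast) := by
  induction T using List.reverseRecOn with
  | nil => exact absurd rfl hT
  | append_singleton T a ih =>
    rcases eq_or_ne T [] with rfl | hT
    · simp [isCoprime_one_right]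
    · rw [List.dropLast_concat, chainDisc_concat hT, sub_eq_neg_add, mul_comm]
      exact (ih hT).symm.neg_left.add_mul_left_left a

lemma chainDisc_dropLast_pos_lt {T : List ℤ} (hT : T ≠ []) (h : ∀ a ∈ T, 2 ≤ a) :
    0 < chainDisc T.dropLast ∧ chainDisc T.dropLast < chainDisc T := by
  induction T using List.reverseRecOn with
  | nil => exact absurd rfl hT
  | append_singleton T a ih =>
    have ha : 2 ≤ a := h a (by simp)
    rcases eq_or_ne T [] with rfl | hT
    · simp only [List.nil_append, List.dropLast_singleton, chainDisc_nil, chainDisc_singleton]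
      omega
    · obtain ⟨h₀, h₁⟩ := ih hT fun b hb => h b (by simp [hb])
      rw [List.dropLast_concat, chainDisc_concat hT]
      constructor <;> nlinarith

lemma exists_chain_of_isCoprime {p q : ℤ} (hq : 0 < q) (hqp : q < p) (hpq : IsCoprime p q) :
    ∃ S : List ℤ, S ≠ [] ∧ (∀ a ∈ S, 2 ≤ a) ∧ chainDisc S = p ∧ chainDisc S.tail = q := by
  rcases eq_or_ne q 1 with rfl | hq₁
  · exact ⟨[p], by simp, fun b hb => by simp at hb; omega, by simp, by simp⟩
  set a := p / q + 1
  set r := a * q - p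
  have ha : 2 ≤ a := by
    have := Int.le_ediv_of_mul_le hq (by linarith : 1 * q ≤ p)
    omega
  have hr₀ : 0 < r := sub_pos.mpr (Int.lt_ediv_add_one_mul_self p hq)
  have hrq : r < q := by
    have hndvd : ¬ q ∣ p := fun hdvd => hq₁ <| by
      have := Int.isUnit_iff.mp (hpq.symm.isUnit_of_dvd' dvd_rfl hdvd)
      omega
    have : p / q * q < p :=
      (Int.ediv_mul_le p hq.ne').lt_of_ne fun h => hndvd ⟨p / q, by linarith⟩
    simp only [r, a]
    linarith
  have hqr : IsCoprime q r := by
    simpa [r, sub_eq_neg_add, mul_comm] using hpq.symm.neg_right.add_mul_left_right a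
  obtain ⟨S, hS, hS₂, hSp, hSq⟩ := exists_chain_of_isCoprime hr₀ hrq hqr
  refine ⟨a :: S, List.cons_ne_nil _ _, ?_, ?_, hSp⟩
  · simpa [ha] using hS₂
  · rw [chainDisc_cons a hS, hSp, hSq]
    ring
termination_by q.toNat
decreasing_by exact (Int.toNat_lt_toNat hq).mpr hrq

/-- **Existence of the adjoint chain.**
For every (nonempty) finite list `T` of integers `≥ 2` there exists a finite list `S`
of integers `≥ 2` such that the chain `T ++ [1] ++ S` has discriminant `0`, i.e. the
chain of type `[T, 1, T*]` has degenerate intersection matrix (it blows down to a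
`0`-curve). -/
theorem adjoint_chain_exists (T : List ℤ) (hT : T ≠ []) (h : ∀ a ∈ T, 2 ≤ a) :
    ∃ S : List ℤ, (∀ a ∈ S, 2 ≤ a) ∧ chainDisc (T ++ [1] ++ S) = 0 := by
  obtain ⟨hm₀, hmn⟩ := chainDisc_dropLast_pos_lt hT h
  have hco : IsCoprime (chainDisc T) (chainDisc T - chainDisc T.dropLast) := by
    simpa [sub_eq_neg_add] using (isCoprime_chainDisc_dropLast hT).neg_right.add_mul_left_right 1
  obtain ⟨S, hS, hS₂, hSp, hSq⟩ :=
    exists_chain_of_isCoprime (by linarith) (by linarith) hco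
  refine ⟨S, hS₂, ?_⟩
  rw [List.append_assoc, List.singleton_append, chainDisc_append hT (List.cons_ne_nil 1 S),
    chainDisc_cons 1 hS, List.tail_cons, hSp, hSq]
  ring
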